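/- (Strategy Equivalence) Let G be a MAGIIAN with MKBSC expansion G^K, and let {α^K_i}_{i∈Agt} be a profile of observation-based memoryless strategies in G^K. Then for every agent i, every nonempty s ⊆ Loc and every o_i ∈ Obs_i, τ_i(s, o_i) = δ_i(s, α^K_i(s), o_i) (each side defined exactly when the other is), where τ_i is the transition function of the induced transducer A_i(α^K_i) and δ_i is the knowledge update function. Consequently, the profile of induced transducers {A_i(α^K_i)}_{i∈Agt} and the profile of first-order knowledge-based strategies based on {α^K_i}_{i∈Agt} and {δ_i}_{i∈Agt} give rise to the same set of outcomes in G. -/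
import Mathlib


open Set

/-- A multi-agent game with imperfect information against Nature (MAGIIAN).
`obs i l` is the observation block of agent `i` containing location `l`;
the axioms make the blocks of each agent a partition of the locations. -/
structure MAGIIAN (Agt Loc : Type) (Act : Agt → Type) where
  init : Loc
  trans : Loc → (∀ i, Act i) → Loc → Prop
  obs : Agt → Loc → Set Loc
  obs_mem : ∀ i l, l ∈ obs i l
  obs_eq : ∀ i l l', l' ∈ obs i l → obs i l' = obs i l

namespace MAGIIAN

variable {Agt Loc : Type} {Act : Agt → Type}

/-- `o` is an observation (block) of agent `i` in `G`. -/
def IsObs (G : MAGIIAN Agt Loc Act) (i : Agt) (o : Set Loc) : Prop :=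
  ∃ l, o = G.obs i l

/-- Transition relation `Δ_i` of the projection `G|_i`. -/
def projTrans (G : MAGIIAN Agt Loc Act) (i : Agt) (l : Loc) (a : Act i) (l' : Loc) : Prop :=
  ∃ σ : ∀ j, Act j, σ i = a ∧ G.trans l σ l'

/-- Transition relation `Δ^K_i` of the individual KBSC expansion `(G|_i)^K`. -/
def kTrans (G : MAGIIAN Agt Loc Act) (i : Agt) (s : Set Loc) (a : Act i) (s' : Set Loc) : Prop :=
  ∃ o : Set Loc, G.IsObs i o ∧ s' = {l' ∈ o | ∃ l ∈ s, G.projTrans i l a l'} ∧ s'.Nonempty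

/-- Pruned joint transition relation `Δ^K` of the MKBSC expansion `G^K`
(unrealisable transitions are removed). -/
def kTransJ (G : MAGIIAN Agt Loc Act) (s : Agt → Set Loc) (σ : ∀ i, Act i)
    (s' : Agt → Set Loc) : Prop :=
  (∀ i, G.kTrans i (s i) (σ i) (s' i)) ∧
    ∃ l ∈ (⋂ i, s i), ∃ l' ∈ (⋂ i, s' i), G.trans l σ l'

/-- The MKBSC expansion `G^K`, as a MAGIIAN over joint knowledge states;
agent `i`'s observation of a joint knowledge state is determined by its `i`-th component. -/
def expand (G : MAGIIAN Agt Loc Act) : MAGIIAN Agt (Agt → Set Loc) Act where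
  init := fun _ => {G.init}
  trans := G.kTransJ
  obs := fun i s => {s' | s' i = s i}
  obs_mem := fun _ _ => rfl
  obs_eq := by
    intro i s s' h
    simp only [Set.mem_setOf_eq] at h
    ext t
    simp [Set.mem_setOf_eq, h]

/-- Reachability from the initial location. -/
def Reachable (G : MAGIIAN Agt Loc Act) (l : Loc) : Prop :=
  Relation.ReflTransGen (fun x y => ∃ σ, G.trans x σ y) G.init l

/-- The MKBSC expansion `G^K` fulfills the perfect-distributed-knowledge (PDK) condition:
every reachable joint knowledge state has singleton component intersection. -/
def PDK (G : MAGIIAN Agt Loc Act) : Prop :=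
  ∀ s : Agt → Set Loc, G.expand.Reachable s → ∃ l : Loc, (⋂ i, s i) = {l}

/-- A full play, given as its sequences of locations and of joint actions. -/
def IsPlay (G : MAGIIAN Agt Loc Act) (l : ℕ → Loc) (σ : ℕ → ∀ i, Act i) : Prop :=
  l 0 = G.init ∧ ∀ k, G.trans (l k) (σ k) (l (k + 1))

/-- Observation history of agent `i` (list of observation blocks) up to time `k`. -/
def obsHist (G : MAGIIAN Agt Loc Act) (i : Agt) (l : ℕ → Loc) (k : ℕ) : List (Set Loc) :=
  (List.range (k + 1)).map fun j => G.obs i (l j)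

/-- Outcomes (location sequences) of a profile of observation-based
perfect-recall strategies. -/
def PROutcome (G : MAGIIAN Agt Loc Act) (α : ∀ i, List (Set Loc) → Act i)
    (l : ℕ → Loc) : Prop :=
  ∃ σ : ℕ → ∀ i, Act i, G.IsPlay l σ ∧ ∀ k i, σ k i = α i (G.obsHist i l k)

/-- Outcomes of a profile of observation-based memoryless strategies. -/
def MLOutcome (G : MAGIIAN Agt Loc Act) (α : ∀ i, Set Loc → Act i) (l : ℕ → Loc) : Prop :=
  ∃ σ : ℕ → ∀ i, Act i, G.IsPlay l σ ∧ ∀ k i, σ k i = α i (G.obs i (l k))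

/-- A play is winning for an observable reachability objective `R` iff some
agent at some point observes an observation in `R`. -/
def WinsReach (G : MAGIIAN Agt Loc Act) (R : Set (Set Loc)) (l : ℕ → Loc) : Prop :=
  ∃ i k, G.obs i (l k) ∈ R

/-- A play is winning for an observable safety objective `F` iff at every point
some agent observes an observation in `F`. -/
def WinsSafe (G : MAGIIAN Agt Loc Act) (F : Set (Set Loc)) (l : ℕ → Loc) : Prop :=
  ∀ k, ∃ i, G.obs i (l k) ∈ F

/-- `ob_i`: maps an observation block of `G^K` for agent `i` (all of whose members have the
same `i`-th component `A`) to the unique observation of `i` in `G` that includes `A`. -/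
def obMap (G : MAGIIAN Agt Loc Act) (i : Agt) (O : Set (Agt → Set Loc)) : Set Loc :=
  ⋃ s ∈ O, ⋃ l ∈ s i, G.obs i l

/-- The translated objective `R^K = {s ∈ S : ∃ i, ∃ o ∈ R ∩ Obs_i, s i ⊆ o}`,
as a set of joint knowledge states. -/
def transObj (G : MAGIIAN Agt Loc Act) (R : Set (Set Loc)) : Set (Agt → Set Loc) :=
  {s | ∃ i, ∃ o ∈ R, G.IsObs i o ∧ s i ⊆ o}

end MAGIIAN


namespace MAGIIAN

variable {Agt Loc : Type} {Act : Agt → Type}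

/-- Outcomes in `G^K` of a profile of observation-based memoryless strategies,
each agent's action depending only on the `i`-th component (its knowledge state)
of the current joint knowledge state. -/
def KMLOutcome (G : MAGIIAN Agt Loc Act) (α : ∀ i, Set Loc → Act i)
    (s : ℕ → Agt → Set Loc) : Prop :=
  ∃ σ : ℕ → ∀ i, Act i, s 0 = (fun _ => {G.init}) ∧
    (∀ k, G.kTransJ (s k) (σ k) (s (k + 1))) ∧
    (∀ k i, σ k i = α i (s k i))

/-- Outcomes in `G` of the profile of induced transducers `{A_i(α^K_i)}`:
each agent `i` starts with memory state `{l_init}`, plays `α i` on its current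
memory state `s`, and updates its memory to the unique `Δ^K_i`-successor `s'` of `s`
contained in its new observation. -/
def TransducerOutcome (G : MAGIIAN Agt Loc Act) (α : ∀ i, Set Loc → Act i)
    (l : ℕ → Loc) : Prop :=
  l 0 = G.init ∧ ∃ σ : ℕ → ∀ i, Act i, ∃ mem : Agt → ℕ → Set Loc,
    (∀ i, mem i 0 = {G.init}) ∧
    (∀ k, G.trans (l k) (σ k) (l (k + 1))) ∧
    (∀ k i, σ k i = α i (mem i k)) ∧
    (∀ k i, G.kTrans i (mem i k) (σ k i) (mem i (k + 1)) ∧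
      mem i (k + 1) ⊆ G.obs i (l (k + 1)))

/-- The knowledge update function `δ_i` of agent `i` (as a total, set-valued map:
it is `defined` precisely when the resulting set is non-empty). -/
def deltaSet (G : MAGIIAN Agt Loc Act) (i : Agt) (s : Set Loc) (a : Act i)
    (o : Set Loc) : Set Loc :=
  {l' ∈ o | ∃ σ : ∀ j, Act j, σ i = a ∧ ∃ l ∈ s, G.trans l σ l'}

/-- Outcomes in `G` of the profile of first-order knowledge-based strategies based on
`{α^K_i}` and the knowledge updates `{δ_i}`: each agent `i` starts with knowledge
state `{l_init}`, plays `α i` on its current knowledge state, and updates it by `δ_i`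
upon its new observation (the update being defined, i.e. non-empty). -/
def KBOutcome (G : MAGIIAN Agt Loc Act) (α : ∀ i, Set Loc → Act i)
    (l : ℕ → Loc) : Prop :=
  l 0 = G.init ∧ ∃ σ : ℕ → ∀ i, Act i, ∃ mem : Agt → ℕ → Set Loc,
    (∀ i, mem i 0 = {G.init}) ∧
    (∀ k, G.trans (l k) (σ k) (l (k + 1))) ∧
    (∀ k i, σ k i = α i (mem i k)) ∧
    (∀ k i, mem i (k + 1) = G.deltaSet i (mem i k) (σ k i) (G.obs i (l (k + 1))) ∧
      (mem i (k + 1)).Nonempty)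

/-- Strategy Equivalence: for every agent `i`, nonempty `s ⊆ Loc` and observation
`o_i ∈ Obs_i`, the transducer update `τ_i(s, o_i)` (the unique `s' ⊆ o_i` with
`(s, α^K_i(s), s') ∈ Δ^K_i`) and the knowledge update `δ_i(s, α^K_i(s), o_i)` agree,
each being defined exactly when the other is; consequently, the profile of induced
transducers and the profile of first-order knowledge-based strategies give rise to
the same set of outcomes in `G`. -/
theorem strategy_equivalence (G : MAGIIAN Agt Loc Act) (α : ∀ i, Set Loc → Act i) :
    (∀ (i : Agt) (s o : Set Loc), s.Nonempty → G.IsObs i o →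
      ∀ s' : Set Loc,
        (G.kTrans i s (α i s) s' ∧ s' ⊆ o) ↔
          (s' = G.deltaSet i s (α i s) o ∧ s'.Nonempty)) ∧
    (∀ l : ℕ → Loc, G.TransducerOutcome α l ↔ G.KBOutcome α l) := by
  have key : ∀ (i : Agt) (s o : Set Loc) (a : Act i), s.Nonempty → G.IsObs i o →
      ∀ s' : Set Loc,
        (G.kTrans i s a s' ∧ s' ⊆ o) ↔ (s' = G.deltaSet i s a o ∧ s'.Nonempty) := by
    rintro i s o a hs ⟨m, ho⟩ s'
    constructor
    · rintro ⟨⟨o', ⟨m', ho'⟩, hs', hne⟩, hsub⟩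
      obtain ⟨x, hx⟩ := hne
      have hxo' : x ∈ o' := by rw [hs'] at hx; exact hx.1
      have hxo : x ∈ o := hsub hx
      have hoo : o = o' := by
        rw [ho, ho'] at *
        rw [← G.obs_eq i m x hxo, G.obs_eq i m' x hxo']
      refine ⟨?_, ⟨x, hx⟩⟩
      rw [hs', ← hoo]
      ext l'
      simp only [deltaSet, projTrans, Set.mem_setOf_eq]
      constructor
      · rintro ⟨h1, l0, hl0, σ, hσa, htr⟩
        exact ⟨h1, σ, hσa, l0, hl0, htr⟩
      · rintro ⟨h1, σ, hσa, l0, hl0, htr⟩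
        exact ⟨h1, l0, hl0, σ, hσa, htr⟩
    · rintro ⟨rfl, hne⟩
      refine ⟨⟨o, ⟨m, ho⟩, ?_, hne⟩, fun x hx => hx.1⟩
      ext l'
      simp only [deltaSet, projTrans, Set.mem_setOf_eq]
      constructor
      · rintro ⟨h1, σ, hσa, l0, hl0, htr⟩
        exact ⟨h1, l0, hl0, σ, hσa, htr⟩
      · rintro ⟨h1, l0, hl0, σ, hσa, htr⟩
        exact ⟨h1, σ, hσa, l0, hl0, htr⟩
  refine ⟨fun i s o hs ho s' => key i s o (α i s) hs ho s', fun l => ?_⟩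
  constructor
  · rintro ⟨h0, σ, mem, hm0, htr, hσ, hk⟩
    have hne : ∀ k i, (mem i k).Nonempty := by
      intro k i
      cases k with
      | zero => rw [hm0 i]; exact ⟨G.init, rfl⟩
      | succ n =>
        obtain ⟨⟨o', _, hs', hne'⟩, _⟩ := hk n i
        exact hne'
    refine ⟨h0, σ, mem, hm0, htr, hσ, fun k i => ?_⟩
    exact (key i (mem i k) (G.obs i (l (k + 1))) (σ k i) (hne k i)
      ⟨l (k + 1), rfl⟩ (mem i (k + 1))).mp (hk k i)
  · rintro ⟨h0, σ, mem, hm0, htr, hσ, hk⟩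
    have hne : ∀ k i, (mem i k).Nonempty := by
      intro k i
      cases k with
      | zero => rw [hm0 i]; exact ⟨G.init, rfl⟩
      | succ n => exact (hk n i).2
    refine ⟨h0, σ, mem, hm0, htr, hσ, fun k i => ?_⟩
    exact (key i (mem i k) (G.obs i (l (k + 1))) (σ k i) (hne k i)
      ⟨l (k + 1), rfl⟩ (mem i (k + 1))).mpr (hk k i)

end MAGIIAN
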